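/- Let $u, v \in S^n$ be perpendicular unit vectors, $p(\theta) = u\cos\theta + v\sin\theta$ for $0 < \theta < \pi$, and $p'(\theta) = -u\sin\theta + v\cos\theta$. If $k_1$ is an increasing function on $[-1,1]$ and $\tau \in (-1,1)$, then $\int_{\{x \in S^n : x\cdot p = \tau\}} k_1(u\cdot x)\,(x\cdot p')\, d\mathcal{H}^{n-1}(x) \le 0$. -/

import Mathlib

open MeasureTheory Metric Set Real
open scoped RealInnerProductSpace

/-!
The reflection `x ↦ x - 2 ⟪x, p'⟫ p'` is an isometry, so it preserves Hausdorff measure and the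
slice `{‖x‖ = 1, ⟪x, p⟫ = τ}`. It negates `⟪x, p'⟫` and shifts `⟪u, x⟫` by
`-2 ⟪u, p'⟫ ⟪x, p'⟫ = 2 sin θ ⟪x, p'⟫`, which has the sign of `⟪x, p'⟫`. Since `k₁` is increasing,
the integrand at `x` and at its mirror image add up to a nonpositive number, and averaging the
integral with its reflected copy gives the claim.
-/

theorem setIntegral_nonpos_of_add_comp_nonpos {α : Type*} [MeasurableSpace α] {μ : Measure α}
    {e : α ≃ᵐ α} (he : MeasurePreserving e μ μ) {s : Set α} (hs : MeasurableSet s)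
    (hes : e ⁻¹' s = s) {f : α → ℝ} (hf : ∀ x ∈ s, f x + f (e x) ≤ 0) :
    ∫ x in s, f x ∂μ ≤ 0 := by
  by_cases hfs : IntegrableOn f s μ
  · have hfes : IntegrableOn (fun x ↦ f (e x)) s μ := by
      simpa only [hes, Function.comp_def] using
        (he.integrableOn_comp_preimage e.measurableEmbedding).mpr hfs
    have hcomp : ∫ x in s, f (e x) ∂μ = ∫ x in s, f x ∂μ := by
      simpa only [hes] using he.setIntegral_preimage_emb e.measurableEmbedding f s
    have hsum : ∫ x in s, (f x + f (e x)) ∂μ ≤ 0 := setIntegral_nonpos hs hf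
    rw [integral_add hfs hfes, hcomp] at hsum
    linarith
  · rw [integral_undef hfs]

section InnerProductSpace

variable {E : Type*} [NormedAddCommGroup E] [InnerProductSpace ℝ E]

theorem reflection_orthogonal_singleton_apply_of_norm_eq_one {q : E} (hq : ‖q‖ = 1) (x : E) :
    (ℝ ∙ q)ᗮ.reflection x = x - (2 * ⟪q, x⟫) • q := by
  rw [Submodule.reflection_orthogonal_apply, Submodule.reflection_singleton_apply, hq]
  simp only [RCLike.ofReal_real_eq_id, id, one_pow, div_one]
  rw [neg_sub, two_smul, two_mul, add_smul]

theorem inner_smul_add_smul_of_orthonormal {u v : E} (hu : ‖u‖ = 1) (hv : ‖v‖ = 1)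
    (huv : ⟪u, v⟫ = 0) (a b c d : ℝ) : ⟪a • u + b • v, c • u + d • v⟫ = a * c + b * d := by
  have hvu : ⟪v, u⟫ = 0 := by rwa [real_inner_comm]
  simp only [inner_add_left, inner_add_right, real_inner_smul_left, real_inner_smul_right,
    real_inner_self_eq_norm_sq, hu, hv, huv, hvu]
  ring

variable [MeasurableSpace E] [BorelSpace E]

theorem setIntegral_slice_monotoneOn_mul_inner_nonpos (d : ℝ) {u p q : E} (hu : ‖u‖ = 1)
    (hq : ‖q‖ = 1) (hqp : ⟪q, p⟫ = 0) (huq : ⟪u, q⟫ < 0) {k : ℝ → ℝ}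
    (hk : MonotoneOn k (Icc (-1) 1)) (τ : ℝ) :
    ∫ x in {x ∈ sphere (0 : E) 1 | ⟪x, p⟫ = τ}, k ⟪u, x⟫ * ⟪x, q⟫ ∂μH[d] ≤ 0 := by
  set e := (ℝ ∙ q)ᗮ.reflection
  have he := reflection_orthogonal_singleton_apply_of_norm_eq_one hq
  have he_p (x : E) : ⟪e x, p⟫ = ⟪x, p⟫ := by
    rw [he, inner_sub_left, real_inner_smul_left, hqp, mul_zero, sub_zero]
  have he_q (x : E) : ⟪e x, q⟫ = -⟪x, q⟫ := by
    rw [he, inner_sub_left, real_inner_smul_left, real_inner_comm x q, real_inner_self_eq_norm_sq,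
      hq]
    ring
  have he_u (x : E) : ⟪u, e x⟫ - ⟪u, x⟫ = ⟪x, q⟫ * (-2 * ⟪u, q⟫) := by
    rw [he, inner_sub_right, real_inner_smul_right, real_inner_comm q x]
    ring
  refine setIntegral_nonpos_of_add_comp_nonpos (e := e.toHomeomorph.toMeasurableEquiv)
    (e.toIsometryEquiv.measurePreserving_hausdorffMeasure d)
    ((isClosed_sphere.inter (isClosed_eq (by fun_prop) continuous_const)).measurableSet)
    ?_ ?_
  · ext x
    simp [he_p]
  · rintro x ⟨hx, -⟩
    rw [mem_sphere_zero_iff_norm] at hx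
    have hex : ‖e x‖ = 1 := by rw [e.norm_map, hx]
    have hmono : 0 ≤ (k ⟪u, e x⟫ - k ⟪u, x⟫) * (⟪u, e x⟫ - ⟪u, x⟫) :=
      (monovaryOn_id_iff.mpr hk).sub_mul_sub_nonneg (real_inner_mem_Icc_of_norm_eq_one hu hx)
        (real_inner_mem_Icc_of_norm_eq_one hu hex)
    rw [he_u, ← mul_assoc, mul_nonneg_iff_of_pos_right (by linarith)] at hmono
    change k ⟪u, x⟫ * ⟪x, q⟫ + k ⟪u, e x⟫ * ⟪e x, q⟫ ≤ 0
    rw [he_q]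
    linarith

end InnerProductSpace

theorem stmt_2 (n : ℕ) (u v : EuclideanSpace ℝ (Fin (n + 1)))
    (hu : ‖u‖ = 1) (hv : ‖v‖ = 1) (huv : ⟪u, v⟫ = 0)
    (θ : ℝ) (hθ : θ ∈ Ioo 0 π)
    (k₁ : ℝ → ℝ) (hk : MonotoneOn k₁ (Icc (-1 : ℝ) 1))
    (τ : ℝ) :
    (∫ x in {x ∈ sphere (0 : EuclideanSpace ℝ (Fin (n + 1))) 1 |
        ⟪x, Real.cos θ • u + Real.sin θ • v⟫ = τ},
      k₁ ⟪u, x⟫ * ⟪x, (-Real.sin θ) • u + Real.cos θ • v⟫ ∂μH[(n : ℝ) - 1]) ≤ 0 := by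
  have hinner := inner_smul_add_smul_of_orthonormal hu hv huv
  have hq : ‖(-Real.sin θ) • u + Real.cos θ • v‖ = 1 := by
    rw [norm_eq_sqrt_real_inner, hinner]
    simp [← sq, sin_sq_add_cos_sq]
  have hqp : ⟪(-Real.sin θ) • u + Real.cos θ • v, Real.cos θ • u + Real.sin θ • v⟫ = 0 := by
    rw [hinner]; ring
  have huq : ⟪u, (-Real.sin θ) • u + Real.cos θ • v⟫ < 0 := by
    have h := hinner 1 0 (-Real.sin θ) (Real.cos θ)
    simp only [one_smul, zero_smul, add_zero] at h
    rw [h]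
    linarith [sin_pos_of_pos_of_lt_pi hθ.1 hθ.2]
  exact setIntegral_slice_monotoneOn_mul_inner_nonpos _ hu hq hqp huq hk τ
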